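/- The spherical join M₁ ∗ M₂ of two metric spaces of diameter at most π, with the metric d((θ,p₁,p₂),(θ',p₁',p₂')) = arccos(cos θ cos θ' cos(min(d₁(p₁,p₁'),π)) + sin θ sin θ' cos(min(d₂(p₂,p₂'),π))), is a metric space; moreover, if M₁ and M₂ are unit spheres of dimensions n₁ and n₂, then M₁ ∗ M₂ is isometric to the unit sphere of dimension n₁ + n₂ + 1. -/

import Mathlib

open Set Real
open scoped RealInnerProductSpace

/-- The spherical-join distance on [0,π/2] × M₁ × M₂ induced by distance
functions d₁, d₂. -/
noncomputable def joinDistOf {M₁ M₂ : Type*} (d₁ : M₁ → M₁ → ℝ) (d₂ : M₂ → M₂ → ℝ)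
    (p q : ℝ × M₁ × M₂) : ℝ :=
  Real.arccos (Real.cos p.1 * Real.cos q.1 * Real.cos (min (d₁ p.2.1 q.2.1) π)
    + Real.sin p.1 * Real.sin q.1 * Real.cos (min (d₂ p.2.2 q.2.2) π))

/-- The identification relation of the spherical join: at θ = 0 the M₂-coordinate
is irrelevant and at θ = π/2 the M₁-coordinate is irrelevant. -/
def joinRel {M₁ M₂ : Type*} (p q : ℝ × M₁ × M₂) : Prop :=
  p.1 = q.1 ∧ (p.1 = π / 2 ∨ p.2.1 = q.2.1) ∧ (p.1 = 0 ∨ p.2.2 = q.2.2)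

/-!
With `a = min d₁ π` and `b = min d₂ π`, the quantity
`cos θ cos θ' cos a + sin θ sin θ' cos b` is the inner product of the unit vectors
`(cos θ, 0, sin θ, 0)` and `(cos θ' cos a, cos θ' sin a, sin θ' cos b, sin θ' sin b)` of `ℝ⁴`,
so every join distance is an angle on `S³`, the join of two circles. For the triangle
inequality, place `p, q, r` on `S³` at circle coordinates `(0, 0)`, `(a₁, b₁)` and
`(a₁ + a₂', b₁ + b₂')`, where the second leg is shortened to `a₂' ≤ a₂` with `a₁ + a₂' ≤ π`
(still `a₃ ≤ a₁ + a₂'`); the triangle inequality for angles on `S³` and the monotonicity of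
`cos` on `[0, π]` compare the three join distances with these angles. The distance vanishes
iff the cosine is `1`, which forces `θ = θ'` and then kills both terms separately.
For unit spheres, `(θ, u, v) ↦ (cos θ • u, sin θ • v)` maps the join onto the unit sphere of
`E₁ × E₂`, and its inner products are exactly the join cosines.
-/

theorem arccos_inner_le_add {E : Type*} [NormedAddCommGroup E] [InnerProductSpace ℝ E]
    {x y z : E} (hx : ‖x‖ = 1) (hy : ‖y‖ = 1) (hz : ‖z‖ = 1) :
    arccos ⟪x, z⟫ ≤ arccos ⟪x, y⟫ + arccos ⟪y, z⟫ := by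
  simpa [InnerProductGeometry.angle, hx, hy, hz] using
    InnerProductGeometry.angle_le_angle_add_angle x y z

theorem exists_norm_eq_one_smul_eq {E : Type*} [NormedAddCommGroup E] [NormedSpace ℝ E]
    [Nontrivial E] (x : E) : ∃ u : E, ‖u‖ = 1 ∧ ‖x‖ • u = x := by
  rcases eq_or_ne x 0 with rfl | hx
  · obtain ⟨u, hu⟩ := exists_norm_eq E zero_le_one
    exact ⟨u, hu, by simp⟩
  · exact ⟨NormedSpace.normalize x, NormedSpace.norm_normalize_eq_one_iff.2 hx,
    NormedSpace.norm_smul_normalize x⟩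

section JoinMap

variable {E₁ E₂ : Type*} [NormedAddCommGroup E₁] [InnerProductSpace ℝ E₁]
  [NormedAddCommGroup E₂] [InnerProductSpace ℝ E₂]

noncomputable def joinMap (θ : ℝ) (u : E₁) (v : E₂) : WithLp 2 (E₁ × E₂) :=
  WithLp.toLp 2 (cos θ • u, sin θ • v)

theorem inner_joinMap (θ θ' : ℝ) (u u' : E₁) (v v' : E₂) :
    ⟪joinMap θ u v, joinMap θ' u' v'⟫ =
      cos θ * cos θ' * ⟪u, u'⟫ + sin θ * sin θ' * ⟪v, v'⟫ := by
  simp only [joinMap, WithLp.prod_inner_apply, real_inner_smul_left,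
    real_inner_smul_right]
  ring

theorem norm_joinMap (θ : ℝ) {u : E₁} {v : E₂} (hu : ‖u‖ = 1) (hv : ‖v‖ = 1) :
    ‖joinMap θ u v‖ = 1 := by
  rw [← sq_eq_sq₀ (norm_nonneg _) zero_le_one, WithLp.prod_norm_sq_eq_of_L2]
  simp [joinMap, WithLp.fst, WithLp.snd, norm_smul, hu, hv]

theorem exists_joinMap_eq [Nontrivial E₁] [Nontrivial E₂] {w : WithLp 2 (E₁ × E₂)}
    (hw : ‖w‖ = 1) :
    ∃ θ ∈ Icc 0 (π / 2), ∃ u : E₁, ‖u‖ = 1 ∧ ∃ v : E₂, ‖v‖ = 1 ∧ joinMap θ u v = w := by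
  have hsq : ‖w.fst‖ ^ 2 + ‖w.snd‖ ^ 2 = 1 := by
    rw [← WithLp.prod_norm_sq_eq_of_L2, hw, one_pow]
  have hfst : ‖w.fst‖ ≤ 1 := by nlinarith [norm_nonneg w.fst, norm_nonneg w.snd]
  obtain ⟨u, hu, hwu⟩ := exists_norm_eq_one_smul_eq w.fst
  obtain ⟨v, hv, hwv⟩ := exists_norm_eq_one_smul_eq w.snd
  refine ⟨arccos ‖w.fst‖, ⟨arccos_nonneg _, arccos_le_pi_div_two.2 (norm_nonneg _)⟩,
    u, hu, v, hv, ?_⟩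
  have hcos : cos (arccos ‖w.fst‖) = ‖w.fst‖ := cos_arccos (by linarith [norm_nonneg w.fst]) hfst
  have hsin : sin (arccos ‖w.fst‖) = ‖w.snd‖ := by
    rw [sin_arccos, show 1 - ‖w.fst‖ ^ 2 = ‖w.snd‖ ^ 2 by linarith, sqrt_sq (norm_nonneg _)]
  rw [joinMap, hcos, hsin, hwu, hwv]
  rfl

end JoinMap

theorem cos_nonneg_and_sin_nonneg {θ : ℝ} (hθ : θ ∈ Icc 0 (π / 2)) : 0 ≤ cos θ ∧ 0 ≤ sin θ :=
  ⟨cos_nonneg_of_mem_Icc ⟨by linarith [hθ.1, pi_pos], hθ.2⟩,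
    sin_nonneg_of_nonneg_of_le_pi hθ.1 (by linarith [hθ.2, pi_pos])⟩

theorem cos_eq_zero_iff_of_mem_Icc {θ : ℝ} (hθ : θ ∈ Icc 0 (π / 2)) : cos θ = 0 ↔ θ = π / 2 := by
  refine ⟨fun h => hθ.2.eq_or_lt.resolve_right fun hlt => ?_, fun h => h ▸ cos_pi_div_two⟩
  exact (cos_pos_of_mem_Ioo ⟨by linarith [hθ.1, pi_pos], hlt⟩).ne' h

theorem sin_eq_zero_iff_of_mem_Icc {θ : ℝ} (hθ : θ ∈ Icc 0 (π / 2)) : sin θ = 0 ↔ θ = 0 :=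
  sin_eq_zero_iff_of_lt_of_lt (by linarith [hθ.1, pi_pos]) (by linarith [hθ.2, pi_pos])

theorem cos_eq_one_iff_of_mem_Icc {a : ℝ} (ha : a ∈ Icc 0 π) : cos a = 1 ↔ a = 0 :=
  cos_eq_one_iff_of_lt_of_lt (by linarith [ha.1, pi_pos]) (by linarith [ha.2, pi_pos])

theorem one_le_sq_mul_add_sq_mul_iff {x y s t : ℝ} (hxy : x ^ 2 + y ^ 2 = 1) (hs : s ≤ 1)
    (ht : t ≤ 1) : 1 ≤ x ^ 2 * s + y ^ 2 * t ↔ (x = 0 ∨ s = 1) ∧ (y = 0 ∨ t = 1) := by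
  have hx : 0 ≤ x ^ 2 * (1 - s) := mul_nonneg (sq_nonneg x) (by linarith)
  have hy : 0 ≤ y ^ 2 * (1 - t) := mul_nonneg (sq_nonneg y) (by linarith)
  constructor
  · intro h
    have hx0 : x ^ 2 * (1 - s) = 0 := by nlinarith
    have hy0 : y ^ 2 * (1 - t) = 0 := by nlinarith
    simp only [mul_eq_zero, pow_eq_zero_iff two_ne_zero, sub_eq_zero] at hx0 hy0
    exact ⟨hx0.imp_right Eq.symm, hy0.imp_right Eq.symm⟩
  · rintro ⟨rfl | rfl, rfl | rfl⟩ <;> linarith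

noncomputable def joinCos (θ θ' a b : ℝ) : ℝ :=
  cos θ * cos θ' * cos a + sin θ * sin θ' * cos b

noncomputable def circlePoint (α : ℝ) : EuclideanSpace ℝ (Fin 2) :=
  !₂[cos α, sin α]

theorem norm_circlePoint (α : ℝ) : ‖circlePoint α‖ = 1 := by
  simp [circlePoint, EuclideanSpace.norm_eq, Fin.sum_univ_two]

theorem inner_circlePoint (α β : ℝ) : ⟪circlePoint α, circlePoint β⟫ = cos (β - α) := by
  simp [circlePoint, PiLp.inner_apply, Fin.sum_univ_two, cos_sub]

theorem inner_joinMap_circlePoint (θ θ' α α' β β' : ℝ) :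
    ⟪joinMap θ (circlePoint α) (circlePoint β), joinMap θ' (circlePoint α') (circlePoint β')⟫ =
      joinCos θ θ' (α' - α) (β' - β) := by
  rw [inner_joinMap, inner_circlePoint, inner_circlePoint, joinCos]

theorem joinCos_le_joinCos {θ θ' a a' b b' : ℝ} (hθ : θ ∈ Icc 0 (π / 2))
    (hθ' : θ' ∈ Icc 0 (π / 2)) (ha : 0 ≤ a) (ha' : a' ≤ π) (haa' : a ≤ a') (hb : 0 ≤ b)
    (hb' : b' ≤ π) (hbb' : b ≤ b') :
    joinCos θ θ' a' b' ≤ joinCos θ θ' a b := by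
  obtain ⟨hc, hs⟩ := cos_nonneg_and_sin_nonneg hθ
  obtain ⟨hc', hs'⟩ := cos_nonneg_and_sin_nonneg hθ'
  unfold joinCos
  gcongr
  · exact cos_le_cos_of_nonneg_of_le_pi ha ha' haa'
  · exact cos_le_cos_of_nonneg_of_le_pi hb hb' hbb'

theorem exists_mem_Icc_le_add_le {a₁ a₂ a₃ c : ℝ} (ha₁ : a₁ ≤ c) (ha₂ : 0 ≤ a₂) (ha₃ : a₃ ≤ c)
    (h : a₃ ≤ a₁ + a₂) : ∃ a ∈ Icc 0 a₂, a₃ ≤ a₁ + a ∧ a₁ + a ≤ c := by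
  refine ⟨min a₂ (c - a₁), ⟨le_min ha₂ (by linarith), min_le_left _ _⟩, ?_, ?_⟩
  · rw [← min_add_add_left]
    exact le_min h (by linarith)
  · linarith [min_le_right a₂ (c - a₁)]

theorem arccos_joinCos_le_add {θ₁ θ₂ θ₃ a₁ a₂ a₃ b₁ b₂ b₃ : ℝ} (hθ₁ : θ₁ ∈ Icc 0 (π / 2))
    (hθ₂ : θ₂ ∈ Icc 0 (π / 2)) (hθ₃ : θ₃ ∈ Icc 0 (π / 2))
    (ha₁ : a₁ ∈ Icc 0 π) (ha₂ : a₂ ∈ Icc 0 π) (ha₃ : a₃ ∈ Icc 0 π) (ha : a₃ ≤ a₁ + a₂)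
    (hb₁ : b₁ ∈ Icc 0 π) (hb₂ : b₂ ∈ Icc 0 π) (hb₃ : b₃ ∈ Icc 0 π) (hb : b₃ ≤ b₁ + b₂) :
    arccos (joinCos θ₁ θ₃ a₃ b₃) ≤
      arccos (joinCos θ₁ θ₂ a₁ b₁) + arccos (joinCos θ₂ θ₃ a₂ b₂) := by
  obtain ⟨a, ⟨ha0, haa₂⟩, ha₃a, haπ⟩ := exists_mem_Icc_le_add_le ha₁.2 ha₂.1 ha₃.2 ha
  obtain ⟨b, ⟨hb0, hbb₂⟩, hb₃b, hbπ⟩ := exists_mem_Icc_le_add_le hb₁.2 hb₂.1 hb₃.2 hb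
  let P := joinMap θ₁ (circlePoint 0) (circlePoint 0)
  let Q := joinMap θ₂ (circlePoint a₁) (circlePoint b₁)
  let R := joinMap θ₃ (circlePoint (a₁ + a)) (circlePoint (b₁ + b))
  have hP : ‖P‖ = 1 := norm_joinMap _ (norm_circlePoint _) (norm_circlePoint _)
  have hQ : ‖Q‖ = 1 := norm_joinMap _ (norm_circlePoint _) (norm_circlePoint _)
  have hR : ‖R‖ = 1 := norm_joinMap _ (norm_circlePoint _) (norm_circlePoint _)
  have hPQ : ⟪P, Q⟫ = joinCos θ₁ θ₂ a₁ b₁ := by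
    simp only [P, Q, inner_joinMap_circlePoint, sub_zero]
  have hQR : ⟪Q, R⟫ = joinCos θ₂ θ₃ a b := by
    simp only [Q, R, inner_joinMap_circlePoint, add_sub_cancel_left]
  have hPR : ⟪P, R⟫ = joinCos θ₁ θ₃ (a₁ + a) (b₁ + b) := by
    simp only [P, R, inner_joinMap_circlePoint, sub_zero]
  calc arccos (joinCos θ₁ θ₃ a₃ b₃)
      ≤ arccos ⟪P, R⟫ := by
        rw [hPR]
        exact arccos_le_arccos (joinCos_le_joinCos hθ₁ hθ₃ ha₃.1 haπ ha₃a hb₃.1 hbπ hb₃b)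
    _ ≤ arccos ⟪P, Q⟫ + arccos ⟪Q, R⟫ := arccos_inner_le_add hP hQ hR
    _ ≤ arccos (joinCos θ₁ θ₂ a₁ b₁) + arccos (joinCos θ₂ θ₃ a₂ b₂) := by
        rw [hPQ, hQR]
        exact add_le_add le_rfl <|
          arccos_le_arccos (joinCos_le_joinCos hθ₂ hθ₃ ha0 ha₂.2 haa₂ hb0 hb₂.2 hbb₂)

theorem joinCos_le_cos_sub {θ θ' a b : ℝ} (hθ : θ ∈ Icc 0 (π / 2)) (hθ' : θ' ∈ Icc 0 (π / 2)) :
    joinCos θ θ' a b ≤ cos (θ - θ') := by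
  obtain ⟨hc, hs⟩ := cos_nonneg_and_sin_nonneg hθ
  obtain ⟨hc', hs'⟩ := cos_nonneg_and_sin_nonneg hθ'
  rw [joinCos, cos_sub]
  exact add_le_add (mul_le_of_le_one_right (mul_nonneg hc hc') (cos_le_one a))
    (mul_le_of_le_one_right (mul_nonneg hs hs') (cos_le_one b))

theorem one_le_joinCos_iff {θ θ' a b : ℝ} (hθ : θ ∈ Icc 0 (π / 2)) (hθ' : θ' ∈ Icc 0 (π / 2))
    (ha : a ∈ Icc 0 π) (hb : b ∈ Icc 0 π) :
    1 ≤ joinCos θ θ' a b ↔ θ = θ' ∧ (θ = π / 2 ∨ a = 0) ∧ (θ = 0 ∨ b = 0) := by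
  suffices h : 1 ≤ joinCos θ θ' a b → θ = θ' by
    by_cases hθθ' : θ = θ'
    · subst hθθ'
      rw [joinCos, ← cos_eq_zero_iff_of_mem_Icc hθ, ← sin_eq_zero_iff_of_mem_Icc hθ,
        ← cos_eq_one_iff_of_mem_Icc ha, ← cos_eq_one_iff_of_mem_Icc hb, ← sq, ← sq,
        one_le_sq_mul_add_sq_mul_iff (cos_sq_add_sin_sq θ) (cos_le_one a) (cos_le_one b)]
      simp
    · exact iff_of_false (mt h hθθ') (by tauto)
  intro h
  have hcos : cos (θ - θ') = 1 := le_antisymm (cos_le_one _) (h.trans (joinCos_le_cos_sub hθ hθ'))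
  rw [cos_eq_one_iff_of_lt_of_lt (by linarith [hθ.1, hθ'.2, pi_pos])
    (by linarith [hθ.2, hθ'.1, pi_pos])] at hcos
  linarith

section TruncatedDist

variable {M : Type*} [PseudoMetricSpace M]

theorem min_dist_mem_Icc {c : ℝ} (hc : 0 ≤ c) (x y : M) : min (dist x y) c ∈ Icc 0 c :=
  ⟨le_min dist_nonneg hc, min_le_right _ _⟩

theorem min_dist_le_add {c : ℝ} (hc : 0 ≤ c) (x y z : M) :
    min (dist x z) c ≤ min (dist x y) c + min (dist y z) c := by
  rcases min_cases (dist x y) c with ⟨h₁, -⟩ | ⟨h₁, -⟩ <;>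
    rcases min_cases (dist y z) c with ⟨h₂, -⟩ | ⟨h₂, -⟩ <;> rw [h₁, h₂]
  · exact min_le_of_left_le (dist_triangle x y z)
  all_goals linarith [min_le_right (dist x z) c, dist_nonneg (x := x) (y := y),
    dist_nonneg (x := y) (y := z)]

end TruncatedDist

theorem min_dist_eq_zero_iff {M : Type*} [MetricSpace M] {c : ℝ} (hc : 0 < c) {x y : M} :
    min (dist x y) c = 0 ↔ x = y := by
  rw [min_eq_iff, dist_eq_zero]
  constructor
  · rintro (⟨h, -⟩ | ⟨rfl, -⟩)
    exacts [h, absurd rfl hc.ne']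
  · rintro rfl
    exact Or.inl ⟨rfl, by simpa using hc.le⟩

section JoinDist

variable {M₁ M₂ : Type*}

theorem joinDistOf_dist_comm [PseudoMetricSpace M₁] [PseudoMetricSpace M₂]
    (p q : ℝ × M₁ × M₂) : joinDistOf dist dist p q = joinDistOf dist dist q p := by
  simp only [joinDistOf, dist_comm p.2.1, dist_comm p.2.2, mul_comm (cos p.1), mul_comm (sin p.1)]

theorem joinDistOf_dist_triangle [PseudoMetricSpace M₁] [PseudoMetricSpace M₂]
    {p q r : ℝ × M₁ × M₂} (hp : p.1 ∈ Icc 0 (π / 2)) (hq : q.1 ∈ Icc 0 (π / 2))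
    (hr : r.1 ∈ Icc 0 (π / 2)) :
    joinDistOf dist dist p r ≤ joinDistOf dist dist p q + joinDistOf dist dist q r :=
  arccos_joinCos_le_add hp hq hr (min_dist_mem_Icc pi_nonneg ..) (min_dist_mem_Icc pi_nonneg ..)
    (min_dist_mem_Icc pi_nonneg ..) (min_dist_le_add pi_nonneg ..)
    (min_dist_mem_Icc pi_nonneg ..) (min_dist_mem_Icc pi_nonneg ..)
    (min_dist_mem_Icc pi_nonneg ..) (min_dist_le_add pi_nonneg ..)

theorem joinDistOf_dist_eq_zero_iff [MetricSpace M₁] [MetricSpace M₂]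
    {p q : ℝ × M₁ × M₂} (hp : p.1 ∈ Icc 0 (π / 2)) (hq : q.1 ∈ Icc 0 (π / 2)) :
    joinDistOf dist dist p q = 0 ↔ joinRel p q := by
  rw [joinDistOf, arccos_eq_zero, ← joinCos, one_le_joinCos_iff hp hq
    (min_dist_mem_Icc pi_nonneg ..) (min_dist_mem_Icc pi_nonneg ..),
    min_dist_eq_zero_iff pi_pos, min_dist_eq_zero_iff pi_pos, joinRel]

end JoinDist

theorem cos_min_arccos_inner_sphere {E : Type*} [NormedAddCommGroup E] [InnerProductSpace ℝ E]
    (u v : Metric.sphere (0 : E) 1) : cos (min (arccos ⟪(u : E), v⟫) π) = ⟪(u : E), v⟫ := by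
  rw [min_eq_left (arccos_le_pi _)]
  exact cos_arccos (neg_one_le_real_inner_of_norm_eq_one (by simp) (by simp))
    (real_inner_le_one_of_norm_eq_one (by simp) (by simp))

theorem joinDistOf_arccos_inner_sphere {E₁ E₂ : Type*} [NormedAddCommGroup E₁]
    [InnerProductSpace ℝ E₁] [NormedAddCommGroup E₂] [InnerProductSpace ℝ E₂]
    (p q : ℝ × Metric.sphere (0 : E₁) 1 × Metric.sphere (0 : E₂) 1) :
    joinDistOf (fun u v : Metric.sphere (0 : E₁) 1 => arccos ⟪(u : E₁), v⟫)
        (fun u v : Metric.sphere (0 : E₂) 1 => arccos ⟪(u : E₂), v⟫) p q =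
      arccos ⟪joinMap p.1 (p.2.1 : E₁) (p.2.2 : E₂), joinMap q.1 (q.2.1 : E₁) (q.2.2 : E₂)⟫ := by
  rw [joinDistOf, inner_joinMap, cos_min_arccos_inner_sphere, cos_min_arccos_inner_sphere]

theorem spherical_join_metric_and_spheres_general
    {M₁ M₂ : Type*} [MetricSpace M₁] [MetricSpace M₂]
    (n₁ n₂ : ℕ) :
    -- (1) the join distance is a pseudometric …
    ((∀ p : ℝ × M₁ × M₂, p.1 ∈ Icc 0 (π / 2) →
        joinDistOf dist dist p p = 0) ∧
     (∀ p q : ℝ × M₁ × M₂, p.1 ∈ Icc 0 (π / 2) → q.1 ∈ Icc 0 (π / 2) →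
        joinDistOf dist dist p q = joinDistOf dist dist q p) ∧
     (∀ p q r : ℝ × M₁ × M₂, p.1 ∈ Icc 0 (π / 2) → q.1 ∈ Icc 0 (π / 2) →
        r.1 ∈ Icc 0 (π / 2) →
        joinDistOf dist dist p r ≤ joinDistOf dist dist p q + joinDistOf dist dist q r) ∧
     -- … vanishing exactly on the identification relation (so it is a metric on
     -- the quotient M₁ ∗ M₂):
     (∀ p q : ℝ × M₁ × M₂, p.1 ∈ Icc 0 (π / 2) → q.1 ∈ Icc 0 (π / 2) →
        (joinDistOf dist dist p q = 0 ↔ joinRel p q))) ∧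
    -- (2) the spherical join of unit spheres is the unit sphere:
    (∃ Φ : ℝ × Metric.sphere (0 : EuclideanSpace ℝ (Fin (n₁ + 1))) 1 ×
            Metric.sphere (0 : EuclideanSpace ℝ (Fin (n₂ + 1))) 1 →
          WithLp 2 (EuclideanSpace ℝ (Fin (n₁ + 1)) × EuclideanSpace ℝ (Fin (n₂ + 1))),
      (∀ p, p.1 ∈ Icc 0 (π / 2) → ‖Φ p‖ = 1) ∧
      (∀ v, ‖v‖ = 1 → ∃ p, p.1 ∈ Icc 0 (π / 2) ∧ Φ p = v) ∧
      (∀ p q, p.1 ∈ Icc 0 (π / 2) → q.1 ∈ Icc 0 (π / 2) →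
        joinDistOf
          (fun u v : Metric.sphere (0 : EuclideanSpace ℝ (Fin (n₁ + 1))) 1 =>
            Real.arccos ⟪(u : EuclideanSpace ℝ (Fin (n₁ + 1))),
              (v : EuclideanSpace ℝ (Fin (n₁ + 1)))⟫)
          (fun u v : Metric.sphere (0 : EuclideanSpace ℝ (Fin (n₂ + 1))) 1 =>
            Real.arccos ⟪(u : EuclideanSpace ℝ (Fin (n₂ + 1))),
              (v : EuclideanSpace ℝ (Fin (n₂ + 1)))⟫)
          p q
        = Real.arccos ⟪Φ p, Φ q⟫)) := by
  refine ⟨⟨fun p hp => (joinDistOf_dist_eq_zero_iff hp hp).2 ⟨rfl, Or.inr rfl, Or.inr rfl⟩,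
    fun p q _ _ => joinDistOf_dist_comm p q, fun p q r => joinDistOf_dist_triangle,
    fun p q => joinDistOf_dist_eq_zero_iff⟩,
    fun p => joinMap p.1 (p.2.1 : EuclideanSpace ℝ (Fin (n₁ + 1))) p.2.2,
    fun p _ => norm_joinMap p.1 (by simp) (by simp), fun v hv => ?_,
    fun p q _ _ => joinDistOf_arccos_inner_sphere p q⟩
  obtain ⟨θ, hθ, u, hu, w, hw, rfl⟩ := exists_joinMap_eq hv
  exact ⟨⟨θ, ⟨u, by simpa using hu⟩, ⟨w, by simpa using hw⟩⟩, hθ, rfl⟩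

/-- The spherical join of two metric spaces of diameter ≤ π is a metric space
(the join distance is a pseudometric on [0,π/2] × M₁ × M₂ vanishing exactly on
the identification relation, hence a metric on the quotient M₁ ∗ M₂); moreover,
the join of unit spheres of dimensions n₁ and n₂ (with their angular metrics) is
isometric to the unit sphere of dimension n₁ + n₂ + 1 with its angular metric. -/
theorem spherical_join_metric_and_spheres
    {M₁ M₂ : Type*} [MetricSpace M₁] [MetricSpace M₂]
    (hd₁ : ∀ u v : M₁, dist u v ≤ π) (hd₂ : ∀ u v : M₂, dist u v ≤ π)
    (n₁ n₂ : ℕ) :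
    -- (1) the join distance is a pseudometric …
    ((∀ p : ℝ × M₁ × M₂, p.1 ∈ Icc 0 (π / 2) →
        joinDistOf dist dist p p = 0) ∧
     (∀ p q : ℝ × M₁ × M₂, p.1 ∈ Icc 0 (π / 2) → q.1 ∈ Icc 0 (π / 2) →
        joinDistOf dist dist p q = joinDistOf dist dist q p) ∧
     (∀ p q r : ℝ × M₁ × M₂, p.1 ∈ Icc 0 (π / 2) → q.1 ∈ Icc 0 (π / 2) →
        r.1 ∈ Icc 0 (π / 2) →
        joinDistOf dist dist p r ≤ joinDistOf dist dist p q + joinDistOf dist dist q r) ∧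
     -- … vanishing exactly on the identification relation (so it is a metric on
     -- the quotient M₁ ∗ M₂):
     (∀ p q : ℝ × M₁ × M₂, p.1 ∈ Icc 0 (π / 2) → q.1 ∈ Icc 0 (π / 2) →
        (joinDistOf dist dist p q = 0 ↔ joinRel p q))) ∧
    -- (2) the spherical join of unit spheres is the unit sphere:
    (∃ Φ : ℝ × Metric.sphere (0 : EuclideanSpace ℝ (Fin (n₁ + 1))) 1 ×
            Metric.sphere (0 : EuclideanSpace ℝ (Fin (n₂ + 1))) 1 →
          WithLp 2 (EuclideanSpace ℝ (Fin (n₁ + 1)) × EuclideanSpace ℝ (Fin (n₂ + 1))),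
      (∀ p, p.1 ∈ Icc 0 (π / 2) → ‖Φ p‖ = 1) ∧
      (∀ v, ‖v‖ = 1 → ∃ p, p.1 ∈ Icc 0 (π / 2) ∧ Φ p = v) ∧
      (∀ p q, p.1 ∈ Icc 0 (π / 2) → q.1 ∈ Icc 0 (π / 2) →
        joinDistOf
          (fun u v : Metric.sphere (0 : EuclideanSpace ℝ (Fin (n₁ + 1))) 1 =>
            Real.arccos ⟪(u : EuclideanSpace ℝ (Fin (n₁ + 1))),
              (v : EuclideanSpace ℝ (Fin (n₁ + 1)))⟫)
          (fun u v : Metric.sphere (0 : EuclideanSpace ℝ (Fin (n₂ + 1))) 1 =>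
            Real.arccos ⟪(u : EuclideanSpace ℝ (Fin (n₂ + 1))),
              (v : EuclideanSpace ℝ (Fin (n₂ + 1)))⟫)
          p q
        = Real.arccos ⟪Φ p, Φ q⟫)) :=
  spherical_join_metric_and_spheres_general n₁ n₂
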